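/- Let $z(\varepsilon)$ be the solution near $-u_s(a)$ of $z + u_s(a) = (-\varepsilon z)^{1/2}\tau$ with $u_s(a)>0$. Then $\omega^{app}(\varepsilon) := 1/z(\varepsilon)$ satisfies the asymptotic expansion $\omega^{app}(\varepsilon) = -\frac{1}{u_s(a)} - \varepsilon^{1/2}\,\frac{\tau}{u_s(a)^{3/2}} + o(\varepsilon^{1/2})$ as $\varepsilon\to 0^+$. -/

import Mathlib

open Set Filter Asymptotics Topology

/-! Since `ε > 0`, the principal square root splits as `(-εz)^{1/2} = √ε (-z)^{1/2}`, so the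
equation reads `1/z + 1/c = (z + c)/(cz) = √ε τ (-z)^{1/2}/(cz)`. As `z → -c` the factor
`(-z)^{1/2}/(cz)` tends to `√c/(-c²) = -c^{-3/2}`, so `1/z + 1/c + √ε τ c^{-3/2}` is `√ε` times a
quantity tending to `0`. -/

namespace Complex

theorem ofReal_mul_cpow {r : ℝ} (hr : 0 ≤ r) (x s : ℂ) :
    ((r : ℂ) * x) ^ s = (r : ℂ) ^ s * x ^ s := by
  rcases hr.eq_or_lt with rfl | hr
  · by_cases hs : s = 0 <;> simp [hs, zero_cpow]
  rcases eq_or_ne x 0 with rfl | hx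
  · by_cases hs : s = 0 <;> simp [hs, zero_cpow]
  have hr' : (r : ℂ) ≠ 0 := ofReal_ne_zero.2 hr.ne'
  rw [cpow_def_of_ne_zero (mul_ne_zero hr' hx), cpow_def_of_ne_zero hr', cpow_def_of_ne_zero hx,
    log_ofReal_mul hr hx, add_mul, exp_add, ofReal_log hr.le]

theorem ofReal_sqrt_eq_cpow {x : ℝ} (hx : 0 ≤ x) : (√x : ℂ) = (x : ℂ) ^ ((1 : ℂ) / 2) := by
  rw [Real.sqrt_eq_rpow, ofReal_cpow hx]
  norm_num

end Complex

theorem Real.rpow_three_halves {x : ℝ} (hx : 0 ≤ x) : x ^ ((3 : ℝ) / 2) = x * √x := by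
  rw [Real.sqrt_eq_rpow, ← Real.rpow_one_add' hx (by norm_num)]
  norm_num

theorem Asymptotics.isLittleO_mul_of_tendsto_zero {α : Type*} {l : Filter α} {f : α → ℝ}
    {g : α → ℂ} (hg : Tendsto g l (𝓝 0)) : (fun x => (f x : ℂ) * g x) =o[l] f := by
  have h := (isBigO_refl (fun x => (f x : ℂ)) l).mul_isLittleO ((isLittleO_one_iff ℂ).2 hg)
  simp only [mul_one] at h
  exact h.trans_isBigO (isBigO_of_le l fun x => by simp)

open Complex in
theorem tendsto_neg_cpow_half_div_mul {α : Type*} {l : Filter α} {z : α → ℂ} {c : ℝ} (hc : 0 < c)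
    (hz : Tendsto z l (𝓝 (-c))) :
    Tendsto (fun a => (-z a) ^ ((1 : ℂ) / 2) / (c * z a)) l
      (𝓝 (-(1 / ((c ^ ((3 : ℝ) / 2) : ℝ) : ℂ)))) := by
  have hc' : (c : ℂ) ≠ 0 := ofReal_ne_zero.2 hc.ne'
  have hsqrt : Tendsto (fun a => (-z a) ^ ((1 : ℂ) / 2)) l (𝓝 ((c : ℂ) ^ ((1 : ℂ) / 2))) :=
    (continuousAt_cpow_const (ofReal_mem_slitPlane.2 hc)).tendsto.comp (by simpa using hz.neg)
  suffices hlim : -(1 / ((c ^ ((3 : ℝ) / 2) : ℝ) : ℂ)) = (c : ℂ) ^ ((1 : ℂ) / 2) / (c * -c) by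
    rw [hlim]
    exact hsqrt.div (tendsto_const_nhds.mul hz) (mul_ne_zero hc' (neg_ne_zero.2 hc'))
  have hs : (√c : ℂ) ≠ 0 := ofReal_ne_zero.2 (Real.sqrt_pos.2 hc).ne'
  have hss : (√c : ℂ) * √c = c := by exact_mod_cast Real.mul_self_sqrt hc.le
  rw [← ofReal_sqrt_eq_cpow hc.le, Real.rpow_three_halves hc.le, ofReal_mul]
  field_simp
  linear_combination hss

theorem one_div_sub_expansion_eq_sqrt_mul {ε c : ℝ} (hε : 0 ≤ ε) (hc : c ≠ 0) {z τ C : ℂ}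
    (hz : z ≠ 0)
    (h : z + c = (-(ε : ℂ) * z) ^ ((1 : ℂ) / 2) * τ) :
    1 / z - (-(1 / (c : ℂ)) - (√ε : ℂ) * τ / C)
      = √ε * (τ * ((-z) ^ ((1 : ℂ) / 2) / (c * z) + 1 / C)) := by
  rw [neg_mul_comm, Complex.ofReal_mul_cpow hε, ← Complex.ofReal_sqrt_eq_cpow hε] at h
  have hc' : (c : ℂ) ≠ 0 := Complex.ofReal_ne_zero.2 hc
  field_simp
  linear_combination h

/-- Asymptotic expansion (4.10): if `z(ε)` solves `z + u_s(a) = (-εz)^{1/2} τ`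
near `-u_s(a)`, then `ω^{app}(ε) = 1/z(ε) = -1/u_s(a) - ε^{1/2} τ/u_s(a)^{3/2} + o(ε^{1/2})`
as `ε → 0⁺`. -/
theorem stmt10 (c : ℝ) (hc : 0 < c) (τ : ℂ) (zf : ℝ → ℂ)
    (heq : ∀ᶠ ε in nhdsWithin (0:ℝ) (Ioi 0),
      zf ε + (c:ℂ) = (-(ε:ℂ) * zf ε) ^ ((1:ℂ)/2) * τ)
    (hlim : Tendsto zf (nhdsWithin (0:ℝ) (Ioi 0)) (nhds (-(c:ℂ)))) :
    (fun ε : ℝ => 1 / zf ε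
        - (-(1 / (c:ℂ)) - (Real.sqrt ε : ℂ) * τ / ((c ^ ((3:ℝ)/2) : ℝ) : ℂ)))
      =o[nhdsWithin (0:ℝ) (Ioi 0)] (fun ε : ℝ => Real.sqrt ε) := by
  set C : ℂ := ((c ^ ((3:ℝ)/2) : ℝ) : ℂ)
  have hz : ∀ᶠ ε in 𝓝[>] 0, zf ε ≠ 0 :=
    hlim.eventually_ne (neg_ne_zero.2 (Complex.ofReal_ne_zero.2 hc.ne'))
  have hremainder : Tendsto (fun ε => τ * ((-zf ε) ^ ((1 : ℂ) / 2) / (c * zf ε) + 1 / C))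
      (𝓝[>] 0) (𝓝 0) := by
    simpa [C] using (tendsto_const_nhds (x := τ)).mul ((tendsto_neg_cpow_half_div_mul hc hlim).add_const (1 / C))
  refine (isLittleO_mul_of_tendsto_zero hremainder).congr' ?_ EventuallyEq.rfl
  filter_upwards [heq, hz, self_mem_nhdsWithin] with ε hε_eq hε_ne hε_pos
  exact (one_div_sub_expansion_eq_sqrt_mul (le_of_lt hε_pos) hc.ne' hε_ne hε_eq).symm
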